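/- arXiv:1703.07760 — 2 statements merged into one kernel-verified Lean document; each statement's English description precedes it below -/
import Mathlib

section
/- Let A ∈ ℝ^{p×p}, B ∈ ℝ^{p×q}, C ∈ ℝ^{m×p}, K ∈ ℝ^{q×p}, L ∈ ℝ^{p×m}, and define the block matrices A̲ = [[A, BK], [−LC, A+BK+LC]] ∈ ℝ^{2p×2p} and B̲ = [B; B] ∈ ℝ^{2p×q} (both blocks equal to B). Then for every integer r ≥ 0, A̲^r B̲ = [(A+BK)^r B; (A+BK)^r B]. -/
open Matrix

/-- **Lemma 1.** For the block matrices
`A̲ = [[A, BK], [−LC, A+BK+LC]]` and `B̲ = [B; B]`, we have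
`A̲^r B̲ = [(A+BK)^r B; (A+BK)^r B]` for all `r ≥ 0`. -/
theorem underlineA_pow_mul_underlineB
    (p q m : ℕ)
    (A : Matrix (Fin p) (Fin p) ℝ) (B : Matrix (Fin p) (Fin q) ℝ)
    (C : Matrix (Fin m) (Fin p) ℝ) (K : Matrix (Fin q) (Fin p) ℝ)
    (L : Matrix (Fin p) (Fin m) ℝ) (r : ℕ) :
    (Matrix.fromBlocks A (B * K) (-(L * C)) (A + B * K + L * C)) ^ r *
        Matrix.fromRows B B =
      Matrix.fromRows ((A + B * K) ^ r * B) ((A + B * K) ^ r * B) := by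
  induction r with
  | zero => simp
  | succ r ih =>
    rw [pow_succ', Matrix.mul_assoc, ih, pow_succ', Matrix.mul_assoc,
      Matrix.fromBlocks_mul_fromRows]
    congr 1 <;> simp only [Matrix.add_mul, Matrix.neg_mul] <;> abel
end

section
/- Let A ∈ ℝ^{p×p}, B ∈ ℝ^{p×q}, C ∈ ℝ^{m×p}, K ∈ ℝ^{q×p}, L ∈ ℝ^{p×m}. Define A̲ = [[A, BK], [−LC, A+BK+LC]], B̲ = [B; B], and C̲ = [C, 0] ∈ ℝ^{m×2p}. Then for every integer r ≥ 0, C̲ · A̲^r · B̲ = C(A+BK)^r B. In particular, if k' = min{k ≥ 0 : C(A+BK)^k B ≠ 0} exists and Σ_E ∈ ℝ^{q×q} is invertible, then C̲ · A̲^{k'} · B̲ · Σ_E ≠ 0. -/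
/-!
Both block rows of `A̲ = [[A, BK], [−LC, A+BK+LC]]` have row sum `A + BK`, so `A̲` maps a
stacked pair `[N; N]` to `[(A+BK)N; (A+BK)N]`. By induction `A̲^r B̲ = [(A+BK)^r B; (A+BK)^r B]`,
and `C̲ = [C, 0]` reads off `C(A+BK)^r B`. The second claim follows since multiplying on the right
by an invertible matrix preserves nonvanishing.
-/

open Matrix

namespace Matrix

variable {n k α : Type*} [Fintype n] [Semiring α]

theorem fromBlocks_mul_fromRows_self {P Q R S M : Matrix n n α} (hPQ : P + Q = M)
    (hRS : R + S = M) (N : Matrix n k α) :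
    fromBlocks P Q R S * fromRows N N = fromRows (M * N) (M * N) := by
  rw [fromBlocks_mul_fromRows, ← Matrix.add_mul, ← Matrix.add_mul, hPQ, hRS]

theorem fromBlocks_pow_mul_fromRows_self [DecidableEq n] {P Q R S M : Matrix n n α}
    (hPQ : P + Q = M) (hRS : R + S = M) (N : Matrix n k α) (r : ℕ) :
    fromBlocks P Q R S ^ r * fromRows N N = fromRows (M ^ r * N) (M ^ r * N) := by
  induction r with
  | zero => simp
  | succ r ih =>
    rw [pow_succ', Matrix.mul_assoc, ih, fromBlocks_mul_fromRows_self hPQ hRS, pow_succ',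
      Matrix.mul_assoc]

end Matrix

/-- With `A̲ = [[A, BK], [−LC, A+BK+LC]]`, `B̲ = [B; B]` and `C̲ = [C, 0]`,
we have `C̲ A̲^r B̲ = C(A+BK)^r B` for every `r ≥ 0`.  In particular, if
`k' = min{k ≥ 0 : C(A+BK)^k B ≠ 0}` exists and `Σ_E` is invertible, then
`C̲ A̲^{k'} B̲ Σ_E ≠ 0`. -/
theorem underlineC_pow_underlineB
    (p q m : ℕ)
    (A : Matrix (Fin p) (Fin p) ℝ) (B : Matrix (Fin p) (Fin q) ℝ)
    (C : Matrix (Fin m) (Fin p) ℝ) (K : Matrix (Fin q) (Fin p) ℝ)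
    (L : Matrix (Fin p) (Fin m) ℝ) :
    (∀ r : ℕ,
      (Matrix.fromCols C 0 : Matrix (Fin m) (Fin p ⊕ Fin p) ℝ) *
          (Matrix.fromBlocks A (B * K) (-(L * C)) (A + B * K + L * C)) ^ r *
          Matrix.fromRows B B =
        C * (A + B * K) ^ r * B) ∧
    ∀ (k' : ℕ) (_ : C * (A + B * K) ^ k' * B ≠ 0)
      (_ : ∀ j < k', C * (A + B * K) ^ j * B = 0)
      (SigmaE : Matrix (Fin q) (Fin q) ℝ) (_ : IsUnit SigmaE),
      (Matrix.fromCols C 0 : Matrix (Fin m) (Fin p ⊕ Fin p) ℝ) *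
          (Matrix.fromBlocks A (B * K) (-(L * C)) (A + B * K + L * C)) ^ k' *
          Matrix.fromRows B B * SigmaE ≠ 0 := by
  have markov : ∀ r : ℕ,
      (fromCols C 0 : Matrix (Fin m) (Fin p ⊕ Fin p) ℝ) *
          (fromBlocks A (B * K) (-(L * C)) (A + B * K + L * C)) ^ r * fromRows B B =
        C * (A + B * K) ^ r * B := by
    intro r
    rw [Matrix.mul_assoc, fromBlocks_pow_mul_fromRows_self rfl (by abel), fromCols_mul_fromRows,
      Matrix.zero_mul, add_zero, Matrix.mul_assoc]
  refine ⟨markov, fun k' hne _ SigmaE hSigmaE => ?_⟩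
  have := hSigmaE.invertible
  rw [markov]
  exact fun h => hne <| (Matrix.mul_left_inj_of_invertible SigmaE).mp (by rw [h, Matrix.zero_mul])
end
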